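/- arXiv:2207.03099 — 3 statements merged into one kernel-verified Lean document; each statement's English description precedes it below -/
import Mathlib

section
/- Let λ₀ > 0, α₀ ∈ (0,1), λ₁ > 0, α₁ > 0 and T > 0. Then the delta effect W ↦ ΔF(W,T) = exp(-λ₀((T+W)^{α₀} - W^{α₀})) - exp(-λ₁ T^{α₁}) is strictly monotone increasing on [0, ∞) as a function of W. -/
open Real

/-- The derivative `a ((c + W)^(a-1) - W^(a-1))` is negative because `t ↦ t^(a-1)` is strictly
decreasing for `a < 1`. -/
lemma rpow_add_sub_rpow_strictAntiOn {a c : ℝ} (ha₀ : 0 < a) (ha₁ : a < 1) (hc : 0 < c) :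
    StrictAntiOn (fun W : ℝ => (c + W) ^ a - W ^ a) (Set.Ici 0) := by
  have hcont : ContinuousOn (fun W : ℝ => (c + W) ^ a - W ^ a) (Set.Ici 0) :=
    ((continuous_const.add continuous_id).continuousOn.rpow_const fun _ _ => Or.inr ha₀.le).sub
      (continuousOn_id.rpow_const fun _ _ => Or.inr ha₀.le)
  refine strictAntiOn_of_deriv_neg (convex_Ici 0) hcont fun x hx => ?_
  rw [interior_Ici] at hx
  have hx₀ : 0 < x := hx
  have hderiv : HasDerivAt (fun W : ℝ => (c + W) ^ a - W ^ a)
      (1 * a * (c + x) ^ (a - 1) - 1 * a * x ^ (a - 1)) x :=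
    (((hasDerivAt_id x).const_add c).rpow_const (Or.inl (by positivity))).sub
      ((hasDerivAt_id x).rpow_const (Or.inl hx₀.ne'))
  have hlt : (c + x) ^ (a - 1) < x ^ (a - 1) :=
    rpow_lt_rpow_of_neg hx₀ (by linarith) (by linarith)
  rw [hderiv.deriv]
  nlinarith

theorem delta_effect_strictMonoOn_general
    (lam₀ alp₀ lam₁ alp₁ T : ℝ)
    (hlam₀ : 0 < lam₀) (halp₀ : alp₀ ∈ Set.Ioo (0 : ℝ) 1)
    (hT : 0 < T) :
    StrictMonoOn
      (fun W : ℝ =>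
        Real.exp (-(lam₀ * ((T + W) ^ alp₀ - W ^ alp₀))) - Real.exp (-(lam₁ * T ^ alp₁)))
      (Set.Ici (0 : ℝ)) := by
  intro x hx y hy hxy
  have hanti := rpow_add_sub_rpow_strictAntiOn halp₀.1 halp₀.2 hT hx hy hxy
  simp only [sub_lt_sub_iff_right, exp_lt_exp, neg_lt_neg_iff]
  exact mul_lt_mul_of_pos_left hanti hlam₀

/-- For `λ₀ > 0`, `α₀ ∈ (0,1)`, `λ₁ > 0`, `α₁ > 0` and `T > 0`, the delta effect
`W ↦ exp(-λ₀((T+W)^α₀ - W^α₀)) - exp(-λ₁ T^α₁)` is strictly monotone increasing on `[0, ∞)`. -/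
theorem delta_effect_strictMonoOn
    (lam₀ alp₀ lam₁ alp₁ T : ℝ)
    (hlam₀ : 0 < lam₀) (halp₀ : alp₀ ∈ Set.Ioo (0 : ℝ) 1)
    (hlam₁ : 0 < lam₁) (halp₁ : 0 < alp₁) (hT : 0 < T) :
    StrictMonoOn
      (fun W : ℝ =>
        Real.exp (-(lam₀ * ((T + W) ^ alp₀ - W ^ alp₀))) - Real.exp (-(lam₁ * T ^ alp₁)))
      (Set.Ici (0 : ℝ)) :=
  delta_effect_strictMonoOn_general lam₀ alp₀ lam₁ alp₁ T hlam₀ halp₀ hT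
end

section
/- Let λ > 0, α ∈ (0,1) and T > 0, and let F(x) = 1 - exp(-λ x^α) be the Weibull cumulative distribution function. Then the conditional visit probability W ↦ (F(T+W) - F(W))/(1 - F(W)) is strictly monotone decreasing on [0, ∞) as a function of W. -/
open Real

/-!
Since `1 - F = exp (-λ x ^ α)`, the conditional visit probability equals
`1 - exp (-λ ((W + T) ^ α - W ^ α))`, so it suffices that the increment of the strictly concave
function `x ^ α` over a window of fixed length `T` strictly decreases as the window moves right.
-/

theorem StrictConcaveOn.strictAntiOn_sub_comp_add {s : Set ℝ} {f : ℝ → ℝ}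
    (hf : StrictConcaveOn ℝ s f) {T : ℝ} (hT : 0 < T) (hs : ∀ x ∈ s, x + T ∈ s) :
    StrictAntiOn (fun x => f (x + T) - f x) s := by
  intro a ha b hb hab
  have hbT := hs b hb
  -- Both increments compare with the secant slope of `f` on `[a, b + T]`.
  have h₁ : (f (b + T) - f a) / (b + T - a) < (f (a + T) - f a) / T := by
    simpa only [add_sub_cancel_left] using
      hf.secant_strict_mono ha (hs a ha) hbT (by linarith) (by linarith) (by linarith)
  have h₂ : (f (b + T) - f b) / T < (f (b + T) - f a) / (b + T - a) := by
    have := hf.secant_strict_mono hbT ha hb (by linarith) (by linarith) hab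
    rwa [← neg_div_neg_eq, neg_sub, neg_sub, add_sub_cancel_left, ← neg_div_neg_eq (f a - _),
      neg_sub, neg_sub] at this
  exact (div_lt_div_iff_of_pos_right hT).1 (h₂.trans h₁)

theorem strictAntiOn_add_rpow_sub_rpow {p : ℝ} (hp₀ : 0 < p) (hp₁ : p < 1) {T : ℝ} (hT : 0 < T) :
    StrictAntiOn (fun x : ℝ => (x + T) ^ p - x ^ p) (Set.Ici 0) :=
  (strictConcaveOn_rpow hp₀ hp₁).strictAntiOn_sub_comp_add hT fun x hx => by
    simp only [Set.mem_Ici] at hx ⊢; linarith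

theorem one_sub_exp_neg_sub_div (a b : ℝ) :
    ((1 - exp (-b)) - (1 - exp (-a))) / (1 - (1 - exp (-a))) = 1 - exp (-(b - a)) := by
  rw [sub_sub_sub_cancel_left, sub_sub_cancel, sub_div, div_self (exp_pos _).ne', ← exp_sub]
  congr 2; ring

theorem strictMono_one_sub_exp_neg_mul {c : ℝ} (hc : 0 < c) :
    StrictMono fun u : ℝ => 1 - exp (-(c * u)) := fun u v huv => by
  have := mul_lt_mul_of_pos_left huv hc
  simp only [sub_lt_sub_iff_left, exp_lt_exp]
  linarith

/-- For `λ > 0`, `α ∈ (0,1)`, `T > 0`, with `F(x) = 1 - exp(-λ x^α)`, the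
conditional visit probability `W ↦ (F(T+W) - F(W))/(1 - F(W))` is strictly decreasing on
`[0, ∞)`. -/
theorem conditional_visit_prob_strictAntiOn
    (lam alp T : ℝ) (hlam : 0 < lam) (halp : alp ∈ Set.Ioo (0 : ℝ) 1) (hT : 0 < T)
    (F : ℝ → ℝ) (hF : ∀ x : ℝ, F x = 1 - Real.exp (-(lam * x ^ alp))) :
    StrictAntiOn (fun W : ℝ => (F (T + W) - F W) / (1 - F W)) (Set.Ici (0 : ℝ)) := by
  have hcond : (fun W : ℝ => (F (T + W) - F W) / (1 - F W))
      = (fun u => 1 - exp (-(lam * u))) ∘ fun W => (W + T) ^ alp - W ^ alp := by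
    funext W
    simp only [hF, one_sub_exp_neg_sub_div, Function.comp, add_comm T, mul_sub]
  rw [hcond]
  exact (strictMono_one_sub_exp_neg_mul hlam).comp_strictAntiOn
    (strictAntiOn_add_rpow_sub_rpow halp.1 halp.2 hT)
end

section
/- Let μ be a Borel probability measure on ℝ such that μ((x, ∞)) = exp(-λ x^α) for every x ≥ 0, where λ > 0 and α ∈ (0,1). Then for every T > 0, the function W ↦ μ((W, T+W]) / μ((W, ∞)) is strictly monotone decreasing on [0, ∞). -/
open Real MeasureTheory Set

/-!
Writing the survival function as `exp (-H x)` with cumulative hazard `H x = λ x ^ α`, the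
conditional probability equals `1 - exp (-(H (T + W) - H W))`. For `α < 1` the hazard `H` is
strictly concave, so its increments `H (T + W) - H W` over windows of fixed length `T` strictly
decrease in `W`, and so does the conditional probability.
-/

lemma StrictConcaveOn.const_mul {s : Set ℝ} {f : ℝ → ℝ} {c : ℝ} (hf : StrictConcaveOn ℝ s f)
    (hc : 0 < c) : StrictConcaveOn ℝ s fun x => c * f x := by
  refine ⟨hf.1, fun x hx y hy hxy a b ha hb hab => ?_⟩
  have := mul_lt_mul_of_pos_left (hf.2 hx hy hxy ha hb hab) hc
  simp only [smul_eq_mul] at this ⊢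
  linarith

lemma StrictConcaveOn.strictAntiOn_add_sub {c T : ℝ} {f : ℝ → ℝ}
    (hf : StrictConcaveOn ℝ (Ici c) f) (hT : 0 < T) :
    StrictAntiOn (fun x => f (T + x) - f x) (Ici c) := by
  intro a ha b hb hab
  have hTb : T + b ∈ Ici c := mem_Ici.2 (by linarith [mem_Ici.1 hb])
  have hd : 0 < T + b - a := by linarith
  -- `b` and `T + a` are the convex combinations of `a` and `T + b` with swapped weights `t`, `1 - t`.
  set t := (b - a) / (T + b - a) with ht
  have ht0 : 0 < t := div_pos (by linarith) hd
  have ht1 : 0 < 1 - t := by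
    rw [ht, one_sub_div hd.ne']
    exact div_pos (by linarith) hd
  have hb_eq : (1 - t) • a + t • (T + b) = b := by
    simp only [smul_eq_mul, ht]
    field_simp
    ring
  have hTa_eq : t • a + (1 - t) • (T + b) = T + a := by
    simp only [smul_eq_mul, ht]
    field_simp
    ring
  have hne : a ≠ T + b := by linarith
  have h₁ := hf.2 ha hTb hne ht1 ht0 (by ring)
  have h₂ := hf.2 ha hTb hne ht0 ht1 (by ring)
  rw [hb_eq] at h₁
  rw [hTa_eq] at h₂
  simp only [smul_eq_mul] at h₁ h₂
  linarith

lemma measure_Ioc_eq_measure_Ioi_sub {μ : Measure ℝ} [IsFiniteMeasure μ] {a b : ℝ} (hab : a ≤ b) :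
    μ (Ioc a b) = μ (Ioi a) - μ (Ioi b) := by
  rw [← Ioi_sdiff_Ioi, measure_sdiff (Ioi_subset_Ioi hab) measurableSet_Ioi.nullMeasurableSet
    (measure_ne_top μ _)]

section Hazard

variable {μ : Measure ℝ} {H : ℝ → ℝ}
  (hsurv : ∀ x, 0 ≤ x → μ (Ioi x) = ENNReal.ofReal (exp (-H x)))
include hsurv

lemma monotoneOn_of_measure_Ioi_eq_ofReal_exp : MonotoneOn H (Ici 0) := by
  intro x hx y hy hxy
  have h := measure_mono (μ := μ) (Ioi_subset_Ioi hxy)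
  rw [hsurv x hx, hsurv y hy, ENNReal.ofReal_le_ofReal_iff (exp_pos _).le, exp_le_exp] at h
  linarith

lemma measure_Ioc_div_measure_Ioi_eq_of_measure_Ioi_eq_ofReal_exp [IsFiniteMeasure μ]
    {T W : ℝ} (hT : 0 ≤ T) (hW : 0 ≤ W) :
    μ (Ioc W (T + W)) / μ (Ioi W) = ENNReal.ofReal (1 - exp (-(H (T + W) - H W))) := by
  rw [measure_Ioc_eq_measure_Ioi_sub (by linarith), hsurv W hW, hsurv (T + W) (by linarith),
    ← ENNReal.ofReal_sub _ (exp_pos _).le, ← ENNReal.ofReal_div_of_pos (exp_pos _), sub_div,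
    div_self (exp_pos _).ne', ← exp_sub]
  ring_nf

theorem strictAntiOn_measure_Ioc_div_measure_Ioi_of_strictConcaveOn [IsFiniteMeasure μ]
    (hH : StrictConcaveOn ℝ (Ici 0) H) {T : ℝ} (hT : 0 < T) :
    StrictAntiOn (fun W => μ (Ioc W (T + W)) / μ (Ioi W)) (Ici 0) := by
  intro a ha b hb hab
  have hmono := monotoneOn_of_measure_Ioi_eq_ofReal_exp hsurv
  have hinc_b : H b ≤ H (T + b) :=
    hmono hb (mem_Ici.2 (by linarith [mem_Ici.1 hb])) (by linarith)
  have hinc : H (T + b) - H b < H (T + a) - H a := hH.strictAntiOn_add_sub hT ha hb hab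
  simp only
  rw [measure_Ioc_div_measure_Ioi_eq_of_measure_Ioi_eq_ofReal_exp hsurv hT.le ha,
    measure_Ioc_div_measure_Ioi_eq_of_measure_Ioi_eq_ofReal_exp hsurv hT.le hb,
    ENNReal.ofReal_lt_ofReal_iff']
  constructor
  · linarith [exp_lt_exp.2 (neg_lt_neg hinc)]
  · linarith [exp_lt_one_iff.2 (by linarith : -(H (T + a) - H a) < 0)]

end Hazard

/-- Let `μ` be a Borel probability measure on `ℝ` with survival function
`μ((x,∞)) = exp(-λ x^α)` for all `x ≥ 0`, where `λ > 0` and `α ∈ (0,1)`. Then for every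
`T > 0`, the conditional probability `W ↦ μ((W, T+W]) / μ((W,∞))` is strictly decreasing on
`[0, ∞)`. -/
theorem weibull_measure_conditional_strictAntiOn
    (μ : Measure ℝ) [IsProbabilityMeasure μ]
    (lam alp : ℝ) (hlam : 0 < lam) (halp : alp ∈ Set.Ioo (0 : ℝ) 1)
    (hsurv : ∀ x : ℝ, 0 ≤ x → μ (Set.Ioi x) = ENNReal.ofReal (Real.exp (-(lam * x ^ alp))))
    (T : ℝ) (hT : 0 < T) :
    StrictAntiOn (fun W : ℝ => μ (Set.Ioc W (T + W)) / μ (Set.Ioi W))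
      (Set.Ici (0 : ℝ)) :=
  strictAntiOn_measure_Ioc_div_measure_Ioi_of_strictConcaveOn hsurv
    ((strictConcaveOn_rpow halp.1 halp.2).const_mul hlam) hT
end
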